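/- Let M > 1, let ε ∈ (0,1), let A be an n×n real symmetric nonsingular matrix with condition number ‖A‖·‖A^{−1}‖ ≤ M, and let b ∈ ℝ^n with ‖b‖ = 1. If the integer k satisfies k ≥ 2 ⌈ ln((1 + √(1−ε²))/ε) / ln((M + 1)/(M − 1)) ⌉, then there exists x in the Krylov subspace span{b, Ab, …, A^{k−1} b} with ‖A x − b‖ ≤ ε. That is, for the class F₂ of symmetric matrices with condition number at most M (without positive definiteness), the minimal residual algorithm computes an ε-approximation within 2⌈ln((1+(1−ε²)^{1/2})/ε) / ln((M+1)/(M−1))⌉ Krylov steps. -/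

import Mathlib

/-!
If `x = q(A) b` then `A x - b = -r(A) b` with `r = 1 - X q`, so it suffices to find `r` of degree
at most `2m` with `r(0) = 1` and `|r| ≤ ε` on the spectrum of `A`. The spectrum lies in
`{y | a ≤ |y| ≤ M a}` for `a = ‖A‖ / M`, so `y²` lies in `[a², M² a²]`. Take
`r(y) = T_m(ℓ(y²)) / T_m(ℓ(0))`, where `ℓ` is the affine map sending `[a², M² a²]` onto `[-1, 1]`.
Then `|r| ≤ 1 / T_m((M² + 1) / (M² - 1))` on the spectrum, and with `ρ = (M + 1) / (M - 1)`
we have `(M² + 1) / (M² - 1) = cosh (log ρ)`, so `T_m` there equals `(ρ^m + ρ^(-m)) / 2`, which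
is at least `1 / ε` once `ρ^m ≥ (1 + √(1 - ε²)) / ε`, the larger root of `s + 1/s = 2/ε`.
-/

/-- The Euclidean norm on `ℝ^n`. -/
noncomputable def euclNorm {n : ℕ} (v : Fin n → ℝ) : ℝ := Real.sqrt (∑ i, v i ^ 2)

/-- The spectral norm of an `n × n` real matrix: the operator norm induced by the
Euclidean norm. -/
noncomputable def specNorm {n : ℕ} (A : Matrix (Fin n) (Fin n) ℝ) : ℝ :=
  ‖LinearMap.toContinuousLinearMap (Matrix.toEuclideanLin A)‖

open Polynomial Polynomial.Chebyshev Module Set Matrix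

namespace Polynomial.Chebyshev

theorem T_real_eval_half_add_inv (m : ℤ) {ρ : ℝ} (hρ : 0 < ρ) :
    (T ℝ m).eval ((ρ + ρ⁻¹) / 2) = (ρ ^ m + (ρ ^ m)⁻¹) / 2 := by
  rw [← Real.cosh_log hρ, T_real_cosh, ← Real.log_zpow, Real.cosh_log (zpow_pos hρ m)]

end Polynomial.Chebyshev

theorem add_inv_le_add_inv {s t : ℝ} (hs : 1 ≤ s) (hst : s ≤ t) : s + s⁻¹ ≤ t + t⁻¹ := by
  have ht : 0 < t := by linarith
  have key : t + t⁻¹ - (s + s⁻¹) = (t - s) * (1 - (s * t)⁻¹) := by field_simp; ring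
  have : (s * t)⁻¹ ≤ 1 := inv_le_one_of_one_le₀ (by nlinarith)
  nlinarith

theorem half_add_inv_div_sub_one {M : ℝ} (hM : 1 < M) :
    ((M + 1) / (M - 1) + ((M + 1) / (M - 1))⁻¹) / 2 = (M ^ 2 + 1) / (M ^ 2 - 1) := by
  have : M - 1 ≠ 0 := by linarith
  have : M + 1 ≠ 0 := by linarith
  have : M ^ 2 - 1 ≠ 0 := by nlinarith
  field_simp
  ring

theorem one_add_sqrt_one_sub_sq_div_add_inv {ε : ℝ} (hε0 : 0 < ε) (hε1 : ε ≤ 1) :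
    (1 + √(1 - ε ^ 2)) / ε + ((1 + √(1 - ε ^ 2)) / ε)⁻¹ = 2 / ε := by
  have hsqrt : √(1 - ε ^ 2) ^ 2 = 1 - ε ^ 2 := Real.sq_sqrt (by nlinarith)
  have : 0 < 1 + √(1 - ε ^ 2) := by positivity
  field_simp
  nlinarith

theorem inv_le_eval_T_real {M ε : ℝ} (hM : 1 < M) (hε : ε ∈ Ioo 0 1) {m : ℕ}
    (hm : Real.log ((1 + √(1 - ε ^ 2)) / ε) / Real.log ((M + 1) / (M - 1)) ≤ m) :
    ε⁻¹ ≤ (T ℝ m).eval ((M ^ 2 + 1) / (M ^ 2 - 1)) := by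
  obtain ⟨hε0, hε1⟩ := hε
  have hρ : 1 < (M + 1) / (M - 1) := by rw [one_lt_div (by linarith)]; linarith
  have hs : 1 ≤ (1 + √(1 - ε ^ 2)) / ε := by
    rw [one_le_div hε0]; linarith [Real.sqrt_nonneg (1 - ε ^ 2)]
  have hsρ : (1 + √(1 - ε ^ 2)) / ε ≤ ((M + 1) / (M - 1)) ^ m := by
    rw [← Real.log_le_log_iff (by linarith) (by positivity), Real.log_pow]
    rwa [div_le_iff₀ (Real.log_pos hρ)] at hm
  have := add_inv_le_add_inv hs hsρ
  rw [one_add_sqrt_one_sub_sq_div_add_inv hε0 hε1.le] at this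
  rw [← half_add_inv_div_sub_one hM, T_real_eval_half_add_inv _ (by linarith), zpow_natCast]
  linarith [show 2 / ε = 2 * ε⁻¹ by ring]

noncomputable def chebyshevResidual (m : ℕ) (α β : ℝ) : ℝ[X] :=
  C ((T ℝ m).eval ((β + α) / (β - α)))⁻¹ * (T ℝ m).comp (C (β - α)⁻¹ * (C (β + α) - 2 * X))

section chebyshevResidual

variable (m : ℕ) {α β : ℝ}

theorem chebyshevResidual_eval (y : ℝ) :
    (chebyshevResidual m α β).eval y =
      ((T ℝ m).eval ((β + α - 2 * y) / (β - α))) / (T ℝ m).eval ((β + α) / (β - α)) := by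
  simp [chebyshevResidual, div_eq_inv_mul, mul_comm]

theorem natDegree_chebyshevResidual_le : (chebyshevResidual m α β).natDegree ≤ m := by
  refine (natDegree_C_mul_le _ _).trans (natDegree_comp_le.trans ?_)
  have h : (C (β - α)⁻¹ * (C (β + α) - 2 * X)).natDegree ≤ 1 := by compute_degree
  simpa [natDegree_T] using Nat.mul_le_mul_left m h

variable (hα : 0 ≤ α) (hαβ : α < β)
include hα hαβ

theorem one_le_eval_T_real_add_div_sub : 1 ≤ (T ℝ m).eval ((β + α) / (β - α)) :=
  one_le_eval_T_real m (by rw [one_le_div (by linarith)]; linarith)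

theorem chebyshevResidual_eval_zero : (chebyshevResidual m α β).eval 0 = 1 := by
  rw [chebyshevResidual_eval, mul_zero, sub_zero,
    div_self (zero_lt_one.trans_le (one_le_eval_T_real_add_div_sub m hα hαβ)).ne']

theorem abs_chebyshevResidual_eval_le {y : ℝ} (hy : y ∈ Icc α β) :
    |(chebyshevResidual m α β).eval y| ≤ ((T ℝ m).eval ((β + α) / (β - α)))⁻¹ := by
  have hT₀ := one_le_eval_T_real_add_div_sub m hα hαβ
  rw [chebyshevResidual_eval, abs_div, abs_of_pos (zero_lt_one.trans_le hT₀), div_eq_mul_inv]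
  refine mul_le_of_le_one_left (by positivity) (abs_eval_T_real_le_one _ ?_)
  rw [abs_div, abs_of_pos (by linarith : 0 < β - α), div_le_one (by linarith), abs_le]
  constructor <;> linarith [hy.1, hy.2]

end chebyshevResidual

theorem exists_residual_poly_abs_eval_le {M ε a : ℝ} (hM : 1 < M) (hε : ε ∈ Ioo 0 1) (ha : 0 < a)
    {m : ℕ} (hm : Real.log ((1 + √(1 - ε ^ 2)) / ε) / Real.log ((M + 1) / (M - 1)) ≤ m) :
    ∃ r : ℝ[X], r.natDegree ≤ 2 * m ∧ r.eval 0 = 1 ∧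
      ∀ y, a ≤ |y| → |y| ≤ M * a → |r.eval y| ≤ ε := by
  have hαβ : a ^ 2 < (M * a) ^ 2 := by gcongr; nlinarith
  refine ⟨(chebyshevResidual m (a ^ 2) ((M * a) ^ 2)).comp (X ^ 2), ?_, ?_, fun y hy₁ hy₂ => ?_⟩
  · rw [natDegree_comp, natDegree_X_pow, mul_comm]
    exact Nat.mul_le_mul_left 2 (natDegree_chebyshevResidual_le m)
  · simpa using chebyshevResidual_eval_zero m (sq_nonneg a) hαβ
  · rw [eval_comp, eval_pow, eval_X]
    refine (abs_chebyshevResidual_eval_le m (sq_nonneg a) hαβ ⟨?_, ?_⟩).trans ?_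
    · rw [← sq_abs y]; gcongr
    · rw [← sq_abs y]; gcongr
    · have ht₀ : ((M * a) ^ 2 + a ^ 2) / ((M * a) ^ 2 - a ^ 2) = (M ^ 2 + 1) / (M ^ 2 - 1) := by
        have : M ^ 2 - 1 ≠ 0 := by nlinarith
        field_simp
      rw [ht₀]
      exact inv_le_of_inv_le₀ hε.1 (inv_le_eval_T_real hM hε hm)

section SymmetricOperator

variable {E : Type*} [NormedAddCommGroup E] [InnerProductSpace ℝ E] [FiniteDimensional ℝ E]
  {T : E →ₗ[ℝ] E}

theorem LinearMap.IsSymmetric.eigenvectorBasis_repr_aeval_apply (hT : T.IsSymmetric) {n : ℕ}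
    (hn : finrank ℝ E = n) (p : ℝ[X]) (v : E) (i : Fin n) :
    (hT.eigenvectorBasis hn).repr (aeval T p v) i =
      p.eval (hT.eigenvalues hn i) * (hT.eigenvectorBasis hn).repr v i := by
  induction p using Polynomial.induction_on generalizing v with
  | C a => simp [Algebra.algebraMap_eq_smul_one]
  | add p q hp hq => simp [hp, hq, add_mul]
  | monomial k a ih =>
    rw [pow_succ, ← mul_assoc, map_mul, aeval_X, End.mul_apply, ih,
      hT.eigenvectorBasis_apply_self_apply, RCLike.ofReal_real_eq_id, id_eq, eval_mul_X]
    ring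

theorem LinearMap.IsSymmetric.norm_aeval_apply_le (hT : T.IsSymmetric) (p : ℝ[X]) {C : ℝ}
    (hC : 0 ≤ C) (hp : ∀ μ, End.HasEigenvalue T μ → |p.eval μ| ≤ C) (v : E) :
    ‖aeval T p v‖ ≤ C * ‖v‖ := by
  set B := hT.eigenvectorBasis rfl
  refine (pow_le_pow_iff_left₀ (norm_nonneg _) (by positivity) two_ne_zero).1 ?_
  calc ‖aeval T p v‖ ^ 2 = ∑ i, p.eval (hT.eigenvalues rfl i) ^ 2 * B.repr v i ^ 2 := by
        simp only [← B.repr.norm_map, EuclideanSpace.norm_sq_eq, B,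
          hT.eigenvectorBasis_repr_aeval_apply, Real.norm_eq_abs, sq_abs, mul_pow]
    _ ≤ ∑ i, C ^ 2 * B.repr v i ^ 2 := by
        refine Finset.sum_le_sum fun i _ => mul_le_mul_of_nonneg_right ?_ (sq_nonneg _)
        exact sq_le_sq.2 ((hp _ (hT.hasEigenvalue_eigenvalues rfl i)).trans (le_abs_self C))
    _ = (C * ‖v‖) ^ 2 := by
        simp only [mul_pow, ← B.repr.norm_map, EuclideanSpace.norm_sq_eq, Finset.mul_sum,
          Real.norm_eq_abs, sq_abs]

end SymmetricOperator

section Krylov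

variable {ι R : Type*} [Fintype ι] [DecidableEq ι] [CommRing R]

def Matrix.krylovSubspace (A : Matrix ι ι R) (b : ι → R) (k : ℕ) : Submodule R (ι → R) :=
  Submodule.span R (range fun i : Fin k => (A ^ (i : ℕ)) *ᵥ b)

theorem Matrix.aeval_mulVec_mem_krylovSubspace (A : Matrix ι ι R) (b : ι → R) {q : R[X]} {k : ℕ}
    (hq : q.degree < k) : aeval A q *ᵥ b ∈ A.krylovSubspace b k := by
  rw [aeval_eq_sum_range, Matrix.sum_mulVec]
  refine Submodule.sum_mem _ fun i _ => ?_
  rw [Matrix.smul_mulVec]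
  by_cases hik : i < k
  · exact Submodule.smul_mem _ _ (Submodule.subset_span ⟨⟨i, hik⟩, rfl⟩)
  · rw [(degree_lt_iff_coeff_zero q k).1 hq i (not_lt.1 hik), zero_smul]
    exact Submodule.zero_mem _

end Krylov

theorem Polynomial.degree_divX_one_sub_lt {R : Type*} [CommRing R] {r : R[X]} {k : ℕ}
    (hr : r.natDegree ≤ k) : (1 - r).divX.degree < k := by
  refine (degree_lt_iff_coeff_zero _ k).2 fun i hi => ?_
  rw [coeff_divX]
  refine coeff_eq_zero_of_natDegree_lt ((natDegree_sub_le _ _).trans_lt ?_)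
  rw [natDegree_one]
  omega

theorem Polynomial.X_mul_divX_one_sub {R : Type*} [CommRing R] {r : R[X]} (hr : r.eval 0 = 1) :
    X * (1 - r).divX = 1 - r := by
  have h := X_mul_divX_add (1 - r)
  rwa [coeff_zero_eq_eval_zero, eval_sub, eval_one, hr, sub_self, map_zero, add_zero] at h

theorem euclNorm_eq_norm_toLp {n : ℕ} (v : Fin n → ℝ) : euclNorm v = ‖WithLp.toLp 2 v‖ := by
  simp [euclNorm, EuclideanSpace.norm_eq]

theorem Matrix.IsHermitian.euclNorm_aeval_mulVec_le {n : ℕ} {A : Matrix (Fin n) (Fin n) ℝ}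
    (hA : A.IsHermitian) (p : ℝ[X]) {C : ℝ} (hC : 0 ≤ C)
    (hp : ∀ μ, End.HasEigenvalue (toEuclideanLin A) μ → |p.eval μ| ≤ C) (v : Fin n → ℝ) :
    euclNorm (aeval A p *ᵥ v) ≤ C * euclNorm v := by
  have h : aeval (toEuclideanLin A) p = toEuclideanLin (aeval A p) :=
    aeval_algHom_apply (toLpLinAlgEquiv 2) A p
  rw [euclNorm_eq_norm_toLp, euclNorm_eq_norm_toLp, ← toLin'_apply, ← toLpLin_toLp, ← h]
  exact (isSymmetric_toEuclideanLin_iff.2 hA).norm_aeval_apply_le p hC hp _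

theorem Matrix.IsHermitian.exists_mem_krylovSubspace_euclNorm_sub_le {n : ℕ}
    {A : Matrix (Fin n) (Fin n) ℝ} (hA : A.IsHermitian) (b : Fin n → ℝ) {r : ℝ[X]}
    (hr0 : r.eval 0 = 1) {k : ℕ} (hrk : r.natDegree ≤ k) {C : ℝ} (hC : 0 ≤ C)
    (hr : ∀ μ, End.HasEigenvalue (toEuclideanLin A) μ → |r.eval μ| ≤ C) :
    ∃ x ∈ A.krylovSubspace b k, euclNorm (A *ᵥ x - b) ≤ C * euclNorm b := by
  refine ⟨aeval A (1 - r).divX *ᵥ b,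
    A.aeval_mulVec_mem_krylovSubspace b (degree_divX_one_sub_lt hrk), ?_⟩
  have hres : A *ᵥ (aeval A (1 - r).divX *ᵥ b) - b = -(aeval A r *ᵥ b) := by
    have hX : A * aeval A (1 - r).divX = aeval A (X * (1 - r).divX) := by rw [map_mul, aeval_X]
    rw [mulVec_mulVec, hX, X_mul_divX_one_sub hr0, map_sub, map_one, sub_mulVec, one_mulVec]
    abel
  rw [hres, euclNorm_eq_norm_toLp, WithLp.toLp_neg, norm_neg, ← euclNorm_eq_norm_toLp]
  exact hA.euclNorm_aeval_mulVec_le r hC hr b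

theorem specNorm_pos {n : ℕ} {A : Matrix (Fin n) (Fin n) ℝ} (hA : A ≠ 0) : 0 < specNorm A := by
  rw [specNorm, norm_pos_iff, Ne, LinearEquiv.map_eq_zero_iff, LinearEquiv.map_eq_zero_iff]
  exact hA

theorem abs_le_specNorm_of_hasEigenvalue {n : ℕ} {A : Matrix (Fin n) (Fin n) ℝ} {μ : ℝ}
    (hμ : End.HasEigenvalue (toEuclideanLin A) μ) : |μ| ≤ specNorm A := by
  obtain ⟨v, hv⟩ := hμ.exists_hasEigenvector
  have h := (LinearMap.toContinuousLinearMap (toEuclideanLin A)).le_opNorm v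
  rw [LinearMap.coe_toContinuousLinearMap', hv.apply_eq_smul, norm_smul, Real.norm_eq_abs] at h
  exact le_of_mul_le_mul_right h (norm_pos_iff.2 hv.2)

theorem one_le_specNorm_inv_mul_abs_of_hasEigenvalue {n : ℕ} {A : Matrix (Fin n) (Fin n) ℝ}
    (hA : IsUnit A) {μ : ℝ} (hμ : End.HasEigenvalue (toEuclideanLin A) μ) :
    1 ≤ specNorm A⁻¹ * |μ| := by
  obtain ⟨v, hv⟩ := hμ.exists_hasEigenvector
  have hinv : toEuclideanLin A⁻¹ (μ • v) = v := by
    rw [← hv.apply_eq_smul, ← LinearMap.comp_apply, ← toLpLin_mul_same,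
      nonsing_inv_mul _ ((isUnit_iff_isUnit_det A).1 hA), toLpLin_one, LinearMap.id_apply]
  have h := (LinearMap.toContinuousLinearMap (toEuclideanLin A⁻¹)).le_opNorm (μ • v)
  rw [LinearMap.coe_toContinuousLinearMap', hinv, norm_smul, Real.norm_eq_abs, ← mul_assoc] at h
  exact le_of_mul_le_mul_right (by simpa [specNorm] using h) (norm_pos_iff.2 hv.2)

theorem specNorm_le_mul_abs_of_hasEigenvalue {n : ℕ} {A : Matrix (Fin n) (Fin n) ℝ} {M : ℝ}
    (hA : IsUnit A) (hcond : specNorm A * specNorm A⁻¹ ≤ M) {μ : ℝ}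
    (hμ : End.HasEigenvalue (toEuclideanLin A) μ) : specNorm A ≤ M * |μ| :=
  calc specNorm A ≤ specNorm A * (specNorm A⁻¹ * |μ|) :=
        le_mul_of_one_le_right (norm_nonneg _) (one_le_specNorm_inv_mul_abs_of_hasEigenvalue hA hμ)
    _ = specNorm A * specNorm A⁻¹ * |μ| := (mul_assoc _ _ _).symm
    _ ≤ M * |μ| := by gcongr

/-- **Step count of the minimal residual algorithm on the class `F₂`.**
Let `A` be symmetric nonsingular with condition number `‖A‖·‖A⁻¹‖ ≤ M` and let
`‖b‖ = 1`.  If `k ≥ 2⌈ln((1+√(1−ε²))/ε) / ln((M+1)/(M−1))⌉` then the Krylov subspace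
`span{b, Ab, …, A^{k−1}b}` contains a vector `x` with residual `‖Ax − b‖ ≤ ε`. -/
theorem stmt_14 (n : ℕ) (M ε : ℝ) (hM : 1 < M) (hε : ε ∈ Set.Ioo (0 : ℝ) 1)
    (A : Matrix (Fin n) (Fin n) ℝ) (hA : A.IsSymm) (hA' : IsUnit A)
    (hcond : specNorm A * specNorm A⁻¹ ≤ M)
    (b : Fin n → ℝ) (hb : euclNorm b = 1) (k : ℕ)
    (hk : 2 * ⌈Real.log ((1 + Real.sqrt (1 - ε ^ 2)) / ε) /
        Real.log ((M + 1) / (M - 1))⌉₊ ≤ k) :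
    ∃ x ∈ Submodule.span ℝ (Set.range fun i : Fin k => (A ^ (i : ℕ)).mulVec b),
      euclNorm (A.mulVec x - b) ≤ ε := by
  have hb0 : b ≠ 0 := by
    rintro rfl
    simp [euclNorm] at hb
  have hA0 : A ≠ 0 := by
    rintro rfl
    refine hb0 ?_
    rw [← one_mulVec b, ← isUnit_zero_iff.1 hA', zero_mulVec]
  set a := specNorm A / M
  have ha : 0 < a := div_pos (specNorm_pos hA0) (by linarith)
  have hspec : ∀ μ, End.HasEigenvalue (toEuclideanLin A) μ → a ≤ |μ| ∧ |μ| ≤ M * a := by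
    intro μ hμ
    constructor
    · exact (div_le_iff₀' (by linarith)).2 (specNorm_le_mul_abs_of_hasEigenvalue hA' hcond hμ)
    · rw [mul_div_cancel₀ _ (by linarith : M ≠ 0)]
      exact abs_le_specNorm_of_hasEigenvalue hμ
  obtain ⟨r, hr_deg, hr0, hr⟩ := exists_residual_poly_abs_eval_le hM hε ha (Nat.le_ceil _)
  obtain ⟨x, hx, hres⟩ := IsHermitian.exists_mem_krylovSubspace_euclNorm_sub_le
    (isHermitian_iff_isSymm.2 hA) b hr0 (hr_deg.trans hk) hε.1.le
    fun μ hμ => hr μ (hspec μ hμ).1 (hspec μ hμ).2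
  exact ⟨x, hx, by rwa [hb, mul_one] at hres⟩
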